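/- arXiv:2502.05511 — 2 statements merged into one kernel-verified Lean document; each statement's English description precedes it below -/
import Mathlib

section
/- Every dominating distribution algorithm is 2-competitive against the optimal online policy: for every dominating distribution algorithm A_dom, every online paging policy B started from the same initial cache, and every horizon T, E[cost(A_dom, T)] ≤ 2 · E[cost(B, T)]. -/
open Finset

/-! ## The Markov paging model

Pages are `Fin n`.  Requests are drawn from a time-homogeneous Markov chain with
row-stochastic transition matrix `M` and a fixed initial distribution `init`.
An online paging policy is given by its (randomized) eviction rule: on a cache miss,
`pol hist cache p` is the probability of evicting page `p`, where `hist` is the list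
of requests seen so far (most recent first, the current — missed — request at the head)
and `cache` is the current cache. -/

/-- A (randomized) online paging policy: given the request history (most recent first,
the current request at the head) and the current cache, the probability of evicting
each page. -/
abbrev Policy (n : ℕ) := List (Fin n) → Finset (Fin n) → Fin n → ℝ

/-- `M` is a row-stochastic transition matrix. -/
def IsStochastic {n : ℕ} (M : Fin n → Fin n → ℝ) : Prop :=
  ∀ i, (∀ j, 0 ≤ M i j) ∧ (∑ j, M i j) = 1

/-- `μ` is a probability distribution on the pages. -/
def IsDist {n : ℕ} (μ : Fin n → ℝ) : Prop :=
  (∀ i, 0 ≤ μ i) ∧ (∑ i, μ i) = 1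

/-- Validity of a policy for cache size `k`: on any (size-`k`) cache, the eviction rule
is a probability distribution supported on the cache. -/
def IsPolicy {n : ℕ} (k : ℕ) (pol : Policy n) : Prop :=
  ∀ (hist : List (Fin n)) (cache : Finset (Fin n)), cache.card = k →
    (∀ p, 0 ≤ pol hist cache p) ∧ (∀ p, p ∉ cache → pol hist cache p = 0) ∧
      (∑ p ∈ cache, pol hist cache p) = 1

/-- Expected number of misses of policy `pol` on the next `T` requests, where the next
request is drawn from `dist`, the history so far is `hist` and the current cache is
`cache`.  On a hit the cache is unchanged; on a miss the policy pays `1`, evicts a page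
`p` with probability `pol (x :: hist) cache p` and brings the requested page in. -/
noncomputable def runAux {n : ℕ} (M : Fin n → Fin n → ℝ) (pol : Policy n) :
    ℕ → (Fin n → ℝ) → List (Fin n) → Finset (Fin n) → ℝ
  | 0, _, _, _ => 0
  | T + 1, dist, hist, cache =>
      ∑ x : Fin n, dist x *
        (if x ∈ cache then runAux M pol T (M x) (x :: hist) cache
         else 1 + ∑ p ∈ cache, pol (x :: hist) cache p *
              runAux M pol T (M x) (x :: hist) (insert x (cache.erase p)))

/-- `E[cost(pol, T)]`: the expected number of cache misses of policy `pol` during the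
first `T` requests of the Markov chain `(M, init)`, starting from cache `cache`. -/
noncomputable def expCost {n : ℕ} (M : Fin n → Fin n → ℝ) (init : Fin n → ℝ)
    (pol : Policy n) (cache : Finset (Fin n)) (T : ℕ) : ℝ :=
  runAux M pol T init [] cache

/-- Probability that, within the next `T` steps of the chain currently at `s`, page `p`
is requested strictly before page `q` (a request to `q` — in particular `p = q` — stops
the process with failure). -/
noncomputable def alphaAux {n : ℕ} (M : Fin n → Fin n → ℝ) (p q : Fin n) :
    ℕ → Fin n → ℝ
  | 0, _ => 0
  | T + 1, s =>
      ∑ x : Fin n, M s x *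
        (if x = q then 0 else if x = p then 1 else alphaAux M p q T x)

/-- `α(p<q|s)`: the probability that, for the chain started at `s`, the first subsequent
request to `p` occurs strictly before the first subsequent request to `q`; in particular
`α(p<p|s) = 0`. -/
noncomputable def alphaProb {n : ℕ} (M : Fin n → Fin n → ℝ) (p q s : Fin n) : ℝ :=
  ⨆ T : ℕ, alphaAux M p q T s

/-- A dominating distribution algorithm: a valid policy which, at every cache miss
(most recent request `s`, current cache `cache`), evicts a page drawn from a dominating
distribution for `cache` given `s`, i.e. one satisfying
`∑ p ∈ cache, μ p * α(p<q|s) ≤ 1/2` for every `q ∈ cache`. -/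
def IsDomPolicy {n : ℕ} (k : ℕ) (M : Fin n → Fin n → ℝ) (pol : Policy n) : Prop :=
  IsPolicy k pol ∧
    ∀ (s : Fin n) (hist : List (Fin n)) (cache : Finset (Fin n)),
      cache.card = k → s ∉ cache →
        ∀ q ∈ cache, (∑ p ∈ cache, pol (s :: hist) cache p * alphaProb M p q s) ≤ 1 / 2

section AlphaLemmas

variable {n : ℕ} {M : Fin n → Fin n → ℝ}

lemma alphaAux_nonneg (hM : IsStochastic M) (p q : Fin n) :
    ∀ (T : ℕ) (s : Fin n), 0 ≤ alphaAux M p q T s := by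
  intro T
  induction T with
  | zero => intro s; simp [alphaAux]
  | succ T ih =>
    intro s
    rw [alphaAux]
    refine Finset.sum_nonneg fun x _ => mul_nonneg ((hM s).1 x) ?_
    split_ifs with h1 h2
    · exact le_rfl
    · exact zero_le_one
    · exact ih x

lemma alphaAux_le_one (hM : IsStochastic M) (p q : Fin n) :
    ∀ (T : ℕ) (s : Fin n), alphaAux M p q T s ≤ 1 := by
  intro T
  induction T with
  | zero => intro s; simp [alphaAux]
  | succ T ih =>
    intro s
    rw [alphaAux]
    calc (∑ x : Fin n, M s x *
        (if x = q then 0 else if x = p then 1 else alphaAux M p q T x))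
        ≤ ∑ x : Fin n, M s x * 1 := by
          refine Finset.sum_le_sum fun x _ => mul_le_mul_of_nonneg_left ?_ ((hM s).1 x)
          split_ifs with h1 h2
          · exact zero_le_one
          · exact le_rfl
          · exact ih x
      _ = 1 := by simp [(hM s).2]

lemma alphaAux_mono (hM : IsStochastic M) (p q : Fin n) :
    ∀ (T : ℕ) (s : Fin n), alphaAux M p q T s ≤ alphaAux M p q (T + 1) s := by
  intro T
  induction T with
  | zero => intro s; rw [show alphaAux M p q 0 s = 0 from rfl]
            exact alphaAux_nonneg hM p q 1 s
  | succ T ih =>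
    intro s
    rw [alphaAux, alphaAux]
    refine Finset.sum_le_sum fun x _ => mul_le_mul_of_nonneg_left ?_ ((hM s).1 x)
    split_ifs with h1 h2
    · exact le_rfl
    · exact le_rfl
    · exact ih x

lemma alphaAux_monotone (hM : IsStochastic M) (p q s : Fin n) :
    Monotone fun T => alphaAux M p q T s :=
  monotone_nat_of_le_succ fun T => alphaAux_mono hM p q T s

lemma alphaAux_bdd (hM : IsStochastic M) (p q s : Fin n) :
    BddAbove (Set.range fun T => alphaAux M p q T s) :=
  ⟨1, by rintro _ ⟨T, rfl⟩; exact alphaAux_le_one hM p q T s⟩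

lemma alphaAux_le_alphaProb (hM : IsStochastic M) (p q : Fin n) (T : ℕ) (s : Fin n) :
    alphaAux M p q T s ≤ alphaProb M p q s :=
  le_ciSup (alphaAux_bdd hM p q s) T

lemma alphaProb_nonneg (hM : IsStochastic M) (p q s : Fin n) : 0 ≤ alphaProb M p q s :=
  le_trans (by simp [alphaAux]) (alphaAux_le_alphaProb hM p q 0 s)

lemma alphaProb_le_one (hM : IsStochastic M) (p q s : Fin n) : alphaProb M p q s ≤ 1 :=
  ciSup_le fun T => alphaAux_le_one hM p q T s

lemma alphaProb_tendsto (hM : IsStochastic M) (p q s : Fin n) :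
    Filter.Tendsto (fun T => alphaAux M p q T s) Filter.atTop (nhds (alphaProb M p q s)) :=
  tendsto_atTop_ciSup (alphaAux_monotone hM p q s) (alphaAux_bdd hM p q s)

/-- The one-step recurrence for `alphaProb`. -/
lemma alphaProb_rec (hM : IsStochastic M) (p q s : Fin n) :
    alphaProb M p q s
      = ∑ x : Fin n, M s x * (if x = q then 0 else if x = p then 1 else alphaProb M p q x) := by
  have h1 : Filter.Tendsto (fun T => alphaAux M p q (T + 1) s) Filter.atTop
      (nhds (alphaProb M p q s)) :=
    (alphaProb_tendsto hM p q s).comp (Filter.tendsto_add_atTop_nat 1)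
  have h2 : Filter.Tendsto (fun T => alphaAux M p q (T + 1) s) Filter.atTop
      (nhds (∑ x : Fin n, M s x * (if x = q then 0 else if x = p then 1 else alphaProb M p q x))) := by
    have : ∀ T, alphaAux M p q (T + 1) s
        = ∑ x : Fin n, M s x * (if x = q then 0 else if x = p then 1 else alphaAux M p q T x) :=
      fun T => rfl
    simp only [this]
    refine tendsto_finset_sum _ fun x _ => Filter.Tendsto.const_mul _ ?_
    split_ifs
    · exact tendsto_const_nhds
    · exact tendsto_const_nhds
    · exact alphaProb_tendsto hM p q x
  exact tendsto_nhds_unique h1 h2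

lemma alphaAux_triangle (hM : IsStochastic M) {p q t : Fin n}
    (hqt : q ≠ t) (hpt : p ≠ t) (hpq : p ≠ q) :
    ∀ (T : ℕ) (s : Fin n), alphaAux M q t T s ≤ alphaAux M q p T s + alphaAux M p t T s := by
  intro T
  induction T with
  | zero => intro s; simp [alphaAux]
  | succ T ih =>
    intro s
    rw [alphaAux, alphaAux, alphaAux, ← Finset.sum_add_distrib]
    refine Finset.sum_le_sum fun x _ => ?_
    rw [← mul_add]
    refine mul_le_mul_of_nonneg_left ?_ ((hM s).1 x)
    by_cases hxt : x = t
    · rw [if_pos hxt, if_pos hxt, add_zero]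
      split_ifs with h1 h2
      · exact le_rfl
      · exact zero_le_one
      · exact alphaAux_nonneg hM q p T x
    · rw [if_neg hxt, if_neg hxt]
      by_cases hxq : x = q
      · have hxp : ¬ x = p := fun h => hpq (h.symm.trans hxq)
        rw [if_pos hxq, if_neg hxp, if_pos hxq, if_neg hxp]
        have := alphaAux_nonneg hM p t T x
        linarith
      · rw [if_neg hxq]
        by_cases hxp : x = p
        · rw [if_pos hxp, if_pos hxp, zero_add]
          exact alphaAux_le_one hM q t T x
        · rw [if_neg hxp, if_neg hxq, if_neg hxp]
          exact ih x

lemma alphaProb_triangle (hM : IsStochastic M) {p q t : Fin n}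
    (hqt : q ≠ t) (hpt : p ≠ t) (hpq : p ≠ q) (s : Fin n) :
    alphaProb M q t s ≤ alphaProb M q p s + alphaProb M p t s :=
  ciSup_le fun T =>
    le_trans (alphaAux_triangle hM hqt hpt hpq T s)
      (add_le_add (alphaAux_le_alphaProb hM q p T s) (alphaAux_le_alphaProb hM p t T s))

end AlphaLemmas
section AstepLemmas

variable {n : ℕ}

/-- The integrand of the one-step recurrence for `alphaProb`. -/
noncomputable def astep (M : Fin n → Fin n → ℝ) (p q x : Fin n) : ℝ :=
  if x = q then 0 else if x = p then 1 else alphaProb M p q x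

variable {M : Fin n → Fin n → ℝ}

lemma astep_nonneg (hM : IsStochastic M) (p q x : Fin n) : 0 ≤ astep M p q x := by
  unfold astep; split_ifs
  · exact le_rfl
  · exact zero_le_one
  · exact alphaProb_nonneg hM p q x

lemma astep_le_one (hM : IsStochastic M) (p q x : Fin n) : astep M p q x ≤ 1 := by
  unfold astep; split_ifs
  · exact zero_le_one
  · exact le_rfl
  · exact alphaProb_le_one hM p q x

lemma sum_mul_astep (hM : IsStochastic M) (p q s : Fin n) :
    (∑ x : Fin n, M s x * astep M p q x) = alphaProb M p q s := by
  simp only [astep]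
  exact (alphaProb_rec hM p q s).symm

lemma sum_mul_astep_le_one (hM : IsStochastic M) (p q s : Fin n) :
    (∑ x : Fin n, M s x * astep M p q x) ≤ 1 := by
  calc (∑ x : Fin n, M s x * astep M p q x) ≤ ∑ x : Fin n, M s x * 1 :=
        Finset.sum_le_sum fun x _ =>
          mul_le_mul_of_nonneg_left (astep_le_one hM p q x) ((hM s).1 x)
    _ = 1 := by simp [(hM s).2]

lemma astep_eq (p q x : Fin n) (h1 : x ≠ q) (h2 : x ≠ p) :
    astep M p q x = alphaProb M p q x := by
  simp [astep, h1, h2]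

end AstepLemmas
section EvictLemma

variable {n : ℕ} {M : Fin n → Fin n → ℝ}

/-- Re-matching lemma for a fault of the dominating algorithm. -/
lemma evict_bound (hM : IsStochastic M)
    (x : Fin n) (CA CB' : Finset (Fin n)) (hx : x ∉ CA) (hxB : x ∈ CB')
    (p : Fin n) (hp : p ∈ CA) (w : Fin n → Fin n) (t : Fin n)
    (hw1 : ∀ q ∈ (CB' \ CA).erase x, w q ∈ CA \ CB')
    (hw2 : Set.InjOn w ↑((CB' \ CA).erase x))
    (ht : t ∈ CA \ CB')
    (htw : ∀ q ∈ (CB' \ CA).erase x, w q ≠ t) :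
    ∃ w' : Fin n → Fin n,
      (∀ q ∈ CB' \ insert x (CA.erase p), w' q ∈ insert x (CA.erase p) \ CB') ∧
      Set.InjOn w' ↑(CB' \ insert x (CA.erase p)) ∧
      ∑ q ∈ CB' \ insert x (CA.erase p), 2 * ∑ y, M x y * astep M q (w' q) y
        ≤ (∑ q ∈ (CB' \ CA).erase x, 2 * alphaProb M q (w q) x) + 2 * alphaProb M p t x := by
  classical
  set K : Finset (Fin n) := (CB' \ CA).erase x with hK
  obtain ⟨htA, htB⟩ := Finset.mem_sdiff.mp ht
  have htx : t ≠ x := fun h => hx (h ▸ htA)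
  have hKA : ∀ q ∈ K, q ∉ CA := fun q hq => (Finset.mem_sdiff.mp (Finset.mem_of_mem_erase hq)).2
  have hKB : ∀ q ∈ K, q ∈ CB' := fun q hq => (Finset.mem_sdiff.mp (Finset.mem_of_mem_erase hq)).1
  have hKx : ∀ q ∈ K, q ≠ x := fun q hq => Finset.ne_of_mem_erase hq
  have hpx : p ≠ x := fun h => hx (h ▸ hp)
  have hwA : ∀ q ∈ K, w q ∈ CA := fun q hq => (Finset.mem_sdiff.mp (hw1 q hq)).1
  have hwB : ∀ q ∈ K, w q ∉ CB' := fun q hq => (Finset.mem_sdiff.mp (hw1 q hq)).2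
  have hw2' : ∀ a ∈ K, ∀ b ∈ K, w a = w b → a = b := fun a ha b hb hab =>
    hw2 (Finset.mem_coe.mpr ha) (Finset.mem_coe.mpr hb) hab
  have hP : insert x (CA.erase p) \ CB' = (CA \ CB').erase p := by
    ext a
    simp only [Finset.mem_sdiff, Finset.mem_insert, Finset.mem_erase]
    constructor
    · rintro ⟨h1 | ⟨h1, h2⟩, h3⟩
      · exact absurd (h1 ▸ hxB) h3
      · exact ⟨h1, h2, h3⟩
    · rintro ⟨h1, h2, h3⟩
      exact ⟨Or.inr ⟨h1, h2⟩, h3⟩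
  -- generic membership description of the new hole set
  have hmem : ∀ a, a ∈ CB' \ insert x (CA.erase p) ↔ (a ∈ K ∨ (a = p ∧ p ∈ CB')) := by
    intro a
    simp only [hK, Finset.mem_sdiff, Finset.mem_insert, Finset.mem_erase, not_or, not_and]
    constructor
    · rintro ⟨h1, h2, h3⟩
      by_cases hap : a = p
      · exact Or.inr ⟨hap, hap ▸ h1⟩
      · exact Or.inl ⟨h2, h1, fun hh => absurd hh (h3 hap)⟩
    · rintro (⟨h1, h2, h3⟩ | ⟨rfl, h2⟩)
      · exact ⟨h2, h1, fun _ => fun hh => absurd hh h3⟩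
      · exact ⟨h2, hpx, fun hh => absurd rfl hh⟩
  by_cases hpB : p ∈ CB'
  · -- the evicted page becomes a new hole, matched to the free witness `t`
    have hQ : CB' \ insert x (CA.erase p) = insert p K := by
      ext a
      rw [hmem a, Finset.mem_insert]
      constructor
      · rintro (h | ⟨rfl, _⟩)
        · exact Or.inr h
        · exact Or.inl rfl
      · rintro (rfl | h)
        · exact Or.inr ⟨rfl, hpB⟩
        · exact Or.inl h
    have hpK : p ∉ K := fun h => hKA p h hp
    have hqp : ∀ q ∈ K, q ≠ p := fun q hq h => hpK (h ▸ hq)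
    have htp : t ≠ p := fun h => htB (h ▸ hpB)
    refine ⟨Function.update w p t, ?_, ?_, ?_⟩
    · intro q hq
      rw [hQ, Finset.mem_insert] at hq
      rw [hP, Finset.mem_erase]
      rcases hq with rfl | hq
      · rw [Function.update_self]
        exact ⟨htp, ht⟩
      · rw [Function.update_of_ne (hqp q hq)]
        exact ⟨fun h : w q = p => hwB q hq (h ▸ hpB), hw1 q hq⟩
    · intro a ha b hb hab
      rw [hQ, Finset.coe_insert, Set.mem_insert_iff] at ha hb
      rcases ha with rfl | ha <;> rcases hb with rfl | hb
      · rfl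
      · have hb' : b ∈ K := Finset.mem_coe.mp hb
        rw [Function.update_self, Function.update_of_ne (hqp b hb')] at hab
        exact absurd hab.symm (htw b hb')
      · have ha' : a ∈ K := Finset.mem_coe.mp ha
        rw [Function.update_self, Function.update_of_ne (hqp a ha')] at hab
        exact absurd hab (htw a ha')
      · have ha' : a ∈ K := Finset.mem_coe.mp ha
        have hb' : b ∈ K := Finset.mem_coe.mp hb
        rw [Function.update_of_ne (hqp a ha'), Function.update_of_ne (hqp b hb')] at hab
        exact hw2' a ha' b hb' hab
    · rw [hQ, Finset.sum_insert hpK, Function.update_self]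
      have h1 : (∑ y, M x y * astep M p t y) = alphaProb M p t x := sum_mul_astep hM p t x
      have h2 : ∀ q ∈ K, 2 * ∑ y, M x y * astep M q (Function.update w p t q) y
          = 2 * alphaProb M q (w q) x := by
        intro q hq
        rw [Function.update_of_ne (hqp q hq), sum_mul_astep hM]
      rw [Finset.sum_congr rfl h2, h1, add_comm]
  · -- the evicted page is a hole of `B`'s cache: the new hole set shrinks
    have hQ : CB' \ insert x (CA.erase p) = K := by
      ext a
      rw [hmem a]
      constructor
      · rintro (h | ⟨rfl, h⟩)
        · exact h
        · exact absurd h hpB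
      · exact fun h => Or.inl h
    rw [hQ, hP]
    have hαpt : 0 ≤ 2 * alphaProb M p t x := by
      have := alphaProb_nonneg hM p t x; linarith
    by_cases hex : ∃ q₀ ∈ K, w q₀ = p
    · obtain ⟨q₀, hq₀K, hq₀⟩ := hex
      have htp : p ≠ t := fun h => htw q₀ hq₀K (hq₀.trans h)
      refine ⟨Function.update w q₀ t, ?_, ?_, ?_⟩
      · intro q hq
        rw [Finset.mem_erase]
        by_cases hqq : q = q₀
        · subst hqq
          rw [Function.update_self]
          exact ⟨fun h => htp h.symm, ht⟩
        · rw [Function.update_of_ne hqq]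
          exact ⟨fun h => hqq (hw2' q hq q₀ hq₀K (h.trans hq₀.symm)), hw1 q hq⟩
      · intro a ha b hb hab
        have ha' : a ∈ K := Finset.mem_coe.mp ha
        have hb' : b ∈ K := Finset.mem_coe.mp hb
        by_cases haq : a = q₀ <;> by_cases hbq : b = q₀
        · rw [haq, hbq]
        · rw [haq, Function.update_self, Function.update_of_ne hbq] at hab
          exact absurd hab.symm (htw b hb')
        · rw [hbq, Function.update_self, Function.update_of_ne haq] at hab
          exact absurd hab (htw a ha')
        · rw [Function.update_of_ne haq, Function.update_of_ne hbq] at hab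
          exact hw2' a ha' b hb' hab
      · have hsplit : ∀ (f : Fin n → ℝ), ∑ q ∈ K, f q = f q₀ + ∑ q ∈ K.erase q₀, f q := by
          intro f
          rw [← Finset.sum_insert (Finset.notMem_erase q₀ K), Finset.insert_erase hq₀K]
        rw [hsplit fun q => 2 * ∑ y, M x y * astep M q (Function.update w q₀ t q) y,
            hsplit fun q => 2 * alphaProb M q (w q) x]
        have h2 : ∀ q ∈ K.erase q₀, 2 * ∑ y, M x y * astep M q (Function.update w q₀ t q) y
            = 2 * alphaProb M q (w q) x := by
          intro q hq
          rw [Function.update_of_ne (Finset.ne_of_mem_erase hq), sum_mul_astep hM]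
        rw [Finset.sum_congr rfl h2, Function.update_self, sum_mul_astep hM]
        have hq₀A : q₀ ∉ CA := hKA q₀ hq₀K
        have htri : alphaProb M q₀ t x ≤ alphaProb M q₀ p x + alphaProb M p t x :=
          alphaProb_triangle hM (fun h : q₀ = t => hq₀A (h ▸ htA))
            htp (fun h : p = q₀ => hq₀A (h ▸ hp)) x
        rw [hq₀]
        linarith
    · push_neg at hex
      refine ⟨w, ?_, hw2, ?_⟩
      · intro q hq
        rw [Finset.mem_erase]
        exact ⟨hex q hq, hw1 q hq⟩
      · have h2 : ∀ q ∈ K, 2 * ∑ y, M x y * astep M q (w q) y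
            = 2 * alphaProb M q (w q) x := fun q hq => by rw [sum_mul_astep hM]
        rw [Finset.sum_congr rfl h2]
        linarith
end EvictLemma
section BFaultLemma

variable {n : ℕ} {M : Fin n → Fin n → ℝ}

/-- Re-matching lemma for a fault of the comparison algorithm `B` alone: the request
`x` is in `CA` but not `CB`; `B` evicts `r ∈ CB`.  The new hole set is matched with
potential at most the old one plus `2`. -/
lemma bfault_bound (hM : IsStochastic M)
    (x : Fin n) (CA CB : Finset (Fin n)) (hxA : x ∈ CA) (hxB : x ∉ CB)
    (r : Fin n) (hr : r ∈ CB) (w : Fin n → Fin n)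
    (hw1 : ∀ q ∈ CB \ CA, w q ∈ CA \ CB) (hw2 : Set.InjOn w ↑(CB \ CA)) :
    ∃ w' : Fin n → Fin n,
      (∀ q ∈ insert x (CB.erase r) \ CA, w' q ∈ CA \ insert x (CB.erase r)) ∧
      Set.InjOn w' ↑(insert x (CB.erase r) \ CA) ∧
      ∑ q ∈ insert x (CB.erase r) \ CA, 2 * ∑ y, M x y * astep M q (w' q) y
        ≤ (∑ q ∈ CB \ CA, 2 * astep M q (w q) x) + 2 := by
  classical
  have hw2' : ∀ a ∈ CB \ CA, ∀ b ∈ CB \ CA, w a = w b → a = b := fun a ha b hb hab =>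
    hw2 (Finset.mem_coe.mpr ha) (Finset.mem_coe.mpr hb) hab
  have hrx : r ≠ x := fun h => hxB (h ▸ hr)
  have hQ' : insert x (CB.erase r) \ CA = (CB \ CA).erase r := by
    ext a
    simp only [Finset.mem_sdiff, Finset.mem_insert, Finset.mem_erase]
    constructor
    · rintro ⟨rfl | ⟨h1, h2⟩, h3⟩
      · exact absurd hxA h3
      · exact ⟨h1, h2, h3⟩
    · rintro ⟨h1, h2, h3⟩
      exact ⟨Or.inr ⟨h1, h2⟩, h3⟩
  have hPmem : ∀ a, a ∈ CA \ insert x (CB.erase r) ↔ a ∈ CA ∧ a ≠ x ∧ (a ∉ CB ∨ a = r) := by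
    intro a
    simp only [Finset.mem_sdiff, Finset.mem_insert, Finset.mem_erase, not_or, not_and]
    constructor
    · rintro ⟨h1, h2, h3⟩
      by_cases har : a = r
      · exact ⟨h1, h2, Or.inr har⟩
      · exact ⟨h1, h2, Or.inl fun hh => absurd hh (h3 har)⟩
    · rintro ⟨h1, h2, h3 | h3⟩
      · exact ⟨h1, h2, fun _ hh => absurd hh h3⟩
      · exact ⟨h1, h2, fun hh _ => absurd h3 hh⟩
  have hQA : ∀ q ∈ (CB \ CA).erase r, q ∉ CA := fun q hq =>
    (Finset.mem_sdiff.mp (Finset.mem_of_mem_erase hq)).2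
  have hQx : ∀ q ∈ (CB \ CA).erase r, q ≠ x := fun q hq h => hQA q hq (h ▸ hxA)
  have hwQ : ∀ q ∈ (CB \ CA).erase r, w q ∈ CA \ CB := fun q hq =>
    hw1 q (Finset.mem_of_mem_erase hq)
  -- the sum over the surviving holes, with the original witnesses, is within budget
  have hbudget : ∀ (S : Finset (Fin n)), S ⊆ (CB \ CA).erase r →
      (∀ q ∈ S, w q ≠ x) →
      ∑ q ∈ S, 2 * ∑ y, M x y * astep M q (w q) y ≤ ∑ q ∈ CB \ CA, 2 * astep M q (w q) x := by
    intro S hS hSx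
    have h1 : ∀ q ∈ S, 2 * ∑ y, M x y * astep M q (w q) y = 2 * astep M q (w q) x := by
      intro q hq
      rw [sum_mul_astep hM, astep_eq _ _ _ (fun h => hSx q hq h.symm)
        (fun h => hQx q (hS hq) h.symm)]
    rw [Finset.sum_congr rfl h1]
    refine Finset.sum_le_sum_of_subset_of_nonneg
      (hS.trans (Finset.erase_subset r (CB \ CA))) fun q hq _ => ?_
    have := astep_nonneg hM q (w q) x
    linarith
  rw [hQ']
  by_cases hex : ∃ q₀ ∈ (CB \ CA).erase r, w q₀ = x
  · obtain ⟨q₀, hq₀K, hq₀⟩ := hex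
    have hq₀r : q₀ ≠ r := Finset.ne_of_mem_erase hq₀K
    have hq₀Q : q₀ ∈ CB \ CA := Finset.mem_of_mem_erase hq₀K
    -- choose the replacement witness
    set t₂ : Fin n := if r ∈ CA then r else w r with ht₂
    have ht₂P : t₂ ∈ CA ∧ t₂ ≠ x ∧ (t₂ ∉ CB ∨ t₂ = r) := by
      by_cases hrA : r ∈ CA
      · rw [ht₂, if_pos hrA]
        exact ⟨hrA, hrx, Or.inr rfl⟩
      · rw [ht₂, if_neg hrA]
        have hrQ : r ∈ CB \ CA := Finset.mem_sdiff.mpr ⟨hr, hrA⟩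
        have hwr := Finset.mem_sdiff.mp (hw1 r hrQ)
        have hwrx : w r ≠ x := fun h => hq₀r (hw2' q₀ hq₀Q r hrQ (hq₀.trans h.symm))
        exact ⟨hwr.1, hwrx, Or.inl hwr.2⟩
    have ht₂w : ∀ q ∈ (CB \ CA).erase r, q ≠ q₀ → w q ≠ t₂ := by
      intro q hq hqq₀ h
      by_cases hrA : r ∈ CA
      · rw [ht₂, if_pos hrA] at h
        exact (Finset.mem_sdiff.mp (hwQ q hq)).2 (h ▸ hr)
      · rw [ht₂, if_neg hrA] at h
        have hrQ : r ∈ CB \ CA := Finset.mem_sdiff.mpr ⟨hr, hrA⟩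
        exact Finset.ne_of_mem_erase hq (hw2' q (Finset.mem_of_mem_erase hq) r hrQ h)
    refine ⟨Function.update w q₀ t₂, ?_, ?_, ?_⟩
    · intro q hq
      rw [hPmem]
      by_cases hqq : q = q₀
      · subst hqq; rw [Function.update_self]; exact ht₂P
      · rw [Function.update_of_ne hqq]
        have h := Finset.mem_sdiff.mp (hwQ q hq)
        exact ⟨h.1, fun hh => hqq (hw2' q (Finset.mem_of_mem_erase hq) q₀ hq₀Q
          (hh.trans hq₀.symm)), Or.inl h.2⟩
    · intro a ha b hb hab
      have ha' : a ∈ (CB \ CA).erase r := Finset.mem_coe.mp ha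
      have hb' : b ∈ (CB \ CA).erase r := Finset.mem_coe.mp hb
      by_cases haq : a = q₀ <;> by_cases hbq : b = q₀
      · rw [haq, hbq]
      · rw [haq, Function.update_self, Function.update_of_ne hbq] at hab
        exact absurd hab.symm (ht₂w b hb' hbq)
      · rw [hbq, Function.update_self, Function.update_of_ne haq] at hab
        exact absurd hab (ht₂w a ha' haq)
      · rw [Function.update_of_ne haq, Function.update_of_ne hbq] at hab
        exact hw2' a (Finset.mem_of_mem_erase ha') b (Finset.mem_of_mem_erase hb') hab
    · have hsplit : ∀ (f : Fin n → ℝ), ∑ q ∈ (CB \ CA).erase r, f q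
          = f q₀ + ∑ q ∈ ((CB \ CA).erase r).erase q₀, f q := by
        intro f
        rw [← Finset.sum_insert (Finset.notMem_erase q₀ _), Finset.insert_erase hq₀K]
      rw [hsplit fun q => 2 * ∑ y, M x y * astep M q (Function.update w q₀ t₂ q) y]
      have h2 : ∀ q ∈ ((CB \ CA).erase r).erase q₀,
          2 * ∑ y, M x y * astep M q (Function.update w q₀ t₂ q) y
            = 2 * ∑ y, M x y * astep M q (w q) y := by
        intro q hq
        rw [Function.update_of_ne (Finset.ne_of_mem_erase hq)]
      rw [Finset.sum_congr rfl h2, Function.update_self]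
      have hle1 : (∑ y, M x y * astep M q₀ t₂ y) ≤ 1 := sum_mul_astep_le_one hM q₀ t₂ x
      have hb := hbudget (((CB \ CA).erase r).erase q₀)
        ((Finset.erase_subset q₀ _)) (fun q hq => fun h =>
          Finset.ne_of_mem_erase hq (hw2' q (Finset.mem_of_mem_erase
            (Finset.mem_of_mem_erase hq)) q₀ hq₀Q (h.trans hq₀.symm)))
      linarith
  · push_neg at hex
    refine ⟨w, ?_, ?_, ?_⟩
    · intro q hq
      rw [hPmem]
      have h := Finset.mem_sdiff.mp (hwQ q hq)
      exact ⟨h.1, hex q hq, Or.inl h.2⟩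
    · exact hw2.mono (by simp [Finset.coe_subset, Finset.erase_subset])
    · have hb := hbudget ((CB \ CA).erase r) le_rfl hex
      linarith
end BFaultLemma
section MainLemma

variable {n : ℕ} {M : Fin n → Fin n → ℝ}

lemma card_swap {C : Finset (Fin n)} {p x : Fin n} (hp : p ∈ C) (hx : x ∉ C) :
    (insert x (C.erase p)).card = C.card := by
  rw [Finset.card_insert_of_notMem (fun h => hx (Finset.mem_of_mem_erase h)),
      Finset.card_erase_of_mem hp]
  exact Nat.succ_pred_eq_of_pos (Finset.card_pos.mpr ⟨p, hp⟩)

lemma budget_le (hM : IsStochastic M) {CA CB : Finset (Fin n)} (w : Fin n → Fin n)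
    (hw1 : ∀ q ∈ CB \ CA, w q ∈ CA \ CB) {x : Fin n} (hxA : x ∉ CA)
    (S : Finset (Fin n)) (hS : S ⊆ CB \ CA) (hSx : x ∉ S) :
    ∑ q ∈ S, 2 * alphaProb M q (w q) x ≤ ∑ q ∈ CB \ CA, 2 * astep M q (w q) x := by
  have h1 : ∀ q ∈ S, 2 * alphaProb M q (w q) x = 2 * astep M q (w q) x := by
    intro q hq
    rw [astep_eq _ _ _ (fun h : x = w q => hxA (h ▸ (Finset.mem_sdiff.mp (hw1 q (hS hq))).1))
      (fun h : x = q => hSx (h ▸ hq))]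
  rw [Finset.sum_congr rfl h1]
  refine Finset.sum_le_sum_of_subset_of_nonneg hS fun q _ _ => ?_
  have := astep_nonneg hM q (w q) x
  linarith

lemma assemble (dist FA FB S : Fin n → ℝ) (hd : ∀ x, 0 ≤ dist x)
    (hcore : ∀ x, FA x ≤ 2 * FB x + S x) :
    ∑ x, dist x * FA x ≤ 2 * (∑ x, dist x * FB x) + ∑ x, dist x * S x := by
  calc ∑ x, dist x * FA x ≤ ∑ x, dist x * (2 * FB x + S x) :=
        Finset.sum_le_sum fun x _ => mul_le_mul_of_nonneg_left (hcore x) (hd x)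
    _ = ∑ x, (2 * (dist x * FB x) + dist x * S x) :=
        Finset.sum_congr rfl fun x _ => by ring
    _ = 2 * (∑ x, dist x * FB x) + ∑ x, dist x * S x := by
        rw [Finset.sum_add_distrib, Finset.mul_sum]

lemma swap_sum (dist : Fin n → ℝ) (Q : Finset (Fin n)) (g : Fin n → Fin n → ℝ) :
    ∑ x, dist x * (∑ q ∈ Q, 2 * g q x) = ∑ q ∈ Q, 2 * ∑ x, dist x * g q x := by
  calc ∑ x, dist x * (∑ q ∈ Q, 2 * g q x)
      = ∑ x : Fin n, ∑ q ∈ Q, 2 * (dist x * g q x) := by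
        refine Finset.sum_congr rfl fun x _ => ?_
        rw [Finset.mul_sum]
        exact Finset.sum_congr rfl fun q _ => by ring
    _ = ∑ q ∈ Q, ∑ x : Fin n, 2 * (dist x * g q x) := Finset.sum_comm
    _ = ∑ q ∈ Q, 2 * ∑ x, dist x * g q x := by
        exact Finset.sum_congr rfl fun q _ => by rw [Finset.mul_sum]

lemma main_bound {k : ℕ} (hM : IsStochastic M)
    {A B : Policy n} (hA : IsDomPolicy k M A) (hB : IsPolicy k B) :
    ∀ (T : ℕ) (dist : Fin n → ℝ), (∀ x, 0 ≤ dist x) → ∀ (hist : List (Fin n)),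
      ∀ (CA CB : Finset (Fin n)), CA.card = k → CB.card = k →
      ∀ (w : Fin n → Fin n), (∀ q ∈ CB \ CA, w q ∈ CA \ CB) →
      Set.InjOn w ↑(CB \ CA) →
      runAux M A T dist hist CA ≤ 2 * runAux M B T dist hist CB
        + ∑ q ∈ CB \ CA, 2 * ∑ x, dist x * astep M q (w q) x := by
  intro T
  induction T with
  | zero =>
    intro dist hd hist CA CB hCA hCB w hw1 hw2
    have h0 : (0:ℝ) ≤ ∑ q ∈ CB \ CA, 2 * ∑ x, dist x * astep M q (w q) x :=
      Finset.sum_nonneg fun q _ => by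
        have : (0:ℝ) ≤ ∑ x, dist x * astep M q (w q) x :=
          Finset.sum_nonneg fun x _ => mul_nonneg (hd x) (astep_nonneg hM _ _ _)
        linarith
    show (0:ℝ) ≤ 2 * 0 + _
    linarith
  | succ T ih =>
    intro dist hd hist CA CB hCA hCB w hw1 hw2
    have hw2' : ∀ a ∈ CB \ CA, ∀ b ∈ CB \ CA, w a = w b → a = b := fun a ha b hb hab =>
      hw2 (Finset.mem_coe.mpr ha) (Finset.mem_coe.mpr hb) hab
    have core : ∀ x : Fin n,
        (if x ∈ CA then runAux M A T (M x) (x :: hist) CA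
         else 1 + ∑ p ∈ CA, A (x :: hist) CA p *
            runAux M A T (M x) (x :: hist) (insert x (CA.erase p)))
        ≤ 2 * (if x ∈ CB then runAux M B T (M x) (x :: hist) CB
         else 1 + ∑ r ∈ CB, B (x :: hist) CB r *
            runAux M B T (M x) (x :: hist) (insert x (CB.erase r)))
        + ∑ q ∈ CB \ CA, 2 * astep M q (w q) x := by
      intro x
      have hMx : ∀ y, 0 ≤ M x y := (hM x).1
      by_cases hxA : x ∈ CA <;> by_cases hxB : x ∈ CB
      · -- Case 1: hit for both
        rw [if_pos hxA, if_pos hxB]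
        have h1 := ih (M x) hMx (x :: hist) CA CB hCA hCB w hw1 hw2
        have h2 : (∑ q ∈ CB \ CA, 2 * ∑ y, M x y * astep M q (w q) y)
            = ∑ q ∈ CB \ CA, 2 * astep M q (w q) x := by
          refine Finset.sum_congr rfl fun q hq => ?_
          obtain ⟨hwA, hwB⟩ := Finset.mem_sdiff.mp (hw1 q hq)
          rw [sum_mul_astep hM, astep_eq _ _ _ (fun h : x = w q => hwB (h ▸ hxB))
            (fun h : x = q => (Finset.mem_sdiff.mp hq).2 (h ▸ hxA))]
        rw [h2] at h1
        exact h1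
      · -- Case 2: fault for B only
        rw [if_pos hxA, if_neg hxB]
        obtain ⟨hν0, hνs, hν1⟩ := hB (x :: hist) CB hCB
        set S := ∑ q ∈ CB \ CA, 2 * astep M q (w q) x with hSdef
        have key : ∀ r ∈ CB, runAux M A T (M x) (x :: hist) CA
            ≤ 2 * runAux M B T (M x) (x :: hist) (insert x (CB.erase r)) + (S + 2) := by
          intro r hr
          obtain ⟨w', hw1', hw2'', hsum⟩ := bfault_bound hM x CA CB hxA hxB r hr w hw1 hw2
          have hcard' : (insert x (CB.erase r)).card = k := by
            rw [card_swap hr hxB]; exact hCB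
          have h1 := ih (M x) hMx (x :: hist) CA (insert x (CB.erase r)) hCA hcard' w'
            hw1' hw2''
          linarith
        have hcomb : runAux M A T (M x) (x :: hist) CA
            ≤ 2 * (∑ r ∈ CB, B (x :: hist) CB r *
                runAux M B T (M x) (x :: hist) (insert x (CB.erase r))) + (S + 2) := by
          calc runAux M A T (M x) (x :: hist) CA
              = ∑ r ∈ CB, B (x :: hist) CB r * runAux M A T (M x) (x :: hist) CA := by
                rw [← Finset.sum_mul, hν1, one_mul]
            _ ≤ ∑ r ∈ CB, B (x :: hist) CB r *
                  (2 * runAux M B T (M x) (x :: hist) (insert x (CB.erase r)) + (S + 2)) :=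
                Finset.sum_le_sum fun r hr =>
                  mul_le_mul_of_nonneg_left (key r hr) (hν0 r)
            _ = 2 * (∑ r ∈ CB, B (x :: hist) CB r *
                  runAux M B T (M x) (x :: hist) (insert x (CB.erase r)))
                + (∑ r ∈ CB, B (x :: hist) CB r) * (S + 2) := by
                rw [Finset.mul_sum, Finset.sum_mul, ← Finset.sum_add_distrib]
                exact Finset.sum_congr rfl fun r _ => by ring
            _ = 2 * (∑ r ∈ CB, B (x :: hist) CB r *
                  runAux M B T (M x) (x :: hist) (insert x (CB.erase r))) + (S + 2) := by
                rw [hν1, one_mul]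
        linarith
      · -- Case 4: fault for A only
        rw [if_neg hxA, if_pos hxB]
        obtain ⟨hμ0, hμs, hμ1⟩ := hA.1 (x :: hist) CA hCA
        have hxQ : x ∈ CB \ CA := Finset.mem_sdiff.mpr ⟨hxB, hxA⟩
        have hwx : w x ∈ CA \ CB := hw1 x hxQ
        obtain ⟨hwxA, hwxB⟩ := Finset.mem_sdiff.mp hwx
        have hw1K : ∀ q ∈ (CB \ CA).erase x, w q ∈ CA \ CB :=
          fun q hq => hw1 q (Finset.mem_of_mem_erase hq)
        have hw2K : Set.InjOn w ↑((CB \ CA).erase x) :=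
          hw2.mono (by simp [Finset.coe_subset, Finset.erase_subset])
        have htw : ∀ q ∈ (CB \ CA).erase x, w q ≠ w x := fun q hq h =>
          Finset.ne_of_mem_erase hq (hw2' q (Finset.mem_of_mem_erase hq) x hxQ h)
        set K := (CB \ CA).erase x with hKdef
        set SK := ∑ q ∈ K, 2 * alphaProb M q (w q) x with hSKdef
        have key : ∀ p ∈ CA, runAux M A T (M x) (x :: hist) (insert x (CA.erase p))
            ≤ 2 * runAux M B T (M x) (x :: hist) CB
              + (SK + 2 * alphaProb M p (w x) x) := by
          intro p hp
          obtain ⟨w', hw1', hw2'', hsum⟩ :=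
            evict_bound hM x CA CB hxA hxB p hp w (w x) hw1K hw2K hwx htw
          have hcard' : (insert x (CA.erase p)).card = k := by
            rw [card_swap hp hxA]; exact hCA
          have h1 := ih (M x) hMx (x :: hist) (insert x (CA.erase p)) CB hcard' hCB w'
            hw1' hw2''
          linarith
        have hdom := hA.2 x hist CA hCA hxA (w x) hwxA
        have hx1 : ∑ p ∈ CA, A (x :: hist) CA p *
            runAux M A T (M x) (x :: hist) (insert x (CA.erase p))
            ≤ 2 * runAux M B T (M x) (x :: hist) CB + SK + 1 := by
          calc ∑ p ∈ CA, A (x :: hist) CA p *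
                runAux M A T (M x) (x :: hist) (insert x (CA.erase p))
              ≤ ∑ p ∈ CA, A (x :: hist) CA p *
                  (2 * runAux M B T (M x) (x :: hist) CB
                    + (SK + 2 * alphaProb M p (w x) x)) :=
                Finset.sum_le_sum fun p hp =>
                  mul_le_mul_of_nonneg_left (key p hp) (hμ0 p)
            _ = (∑ p ∈ CA, A (x :: hist) CA p) *
                  (2 * runAux M B T (M x) (x :: hist) CB + SK)
                + 2 * ∑ p ∈ CA, A (x :: hist) CA p * alphaProb M p (w x) x := by
                rw [Finset.sum_mul, Finset.mul_sum, ← Finset.sum_add_distrib]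
                exact Finset.sum_congr rfl fun p _ => by ring
            _ ≤ (2 * runAux M B T (M x) (x :: hist) CB + SK) + 2 * (1/2) := by
                rw [hμ1, one_mul]
                have h2 : 2 * (∑ p ∈ CA, A (x :: hist) CA p * alphaProb M p (w x) x)
                    ≤ 2 * (1/2) := by linarith
                linarith
            _ = 2 * runAux M B T (M x) (x :: hist) CB + SK + 1 := by ring
        have hS : (∑ q ∈ CB \ CA, 2 * astep M q (w q) x) = 2 + SK := by
          have hins : ∑ q ∈ CB \ CA, 2 * astep M q (w q) x
              = 2 * astep M x (w x) x + ∑ q ∈ K, 2 * astep M q (w q) x := by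
            have he : CB \ CA = insert x K := (Finset.insert_erase hxQ).symm
            rw [he, Finset.sum_insert (Finset.notMem_erase x _)]
          have hxx : astep M x (w x) x = 1 := by
            rw [astep, if_neg (fun h : x = w x => hxA (h ▸ hwxA)), if_pos rfl]
          have hKeq : ∀ q ∈ K, 2 * astep M q (w q) x = 2 * alphaProb M q (w q) x := by
            intro q hq
            rw [astep_eq _ _ _
              (fun h : x = w q => hxA (h ▸ (Finset.mem_sdiff.mp (hw1K q hq)).1))
              (fun h : x = q => Finset.ne_of_mem_erase hq h.symm)]
          rw [hins, hxx, Finset.sum_congr rfl hKeq, hSKdef]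
          ring
        rw [hS]
        linarith
      · -- Case 3: fault for both
        rw [if_neg hxA, if_neg hxB]
        obtain ⟨hμ0, hμs, hμ1⟩ := hA.1 (x :: hist) CA hCA
        obtain ⟨hν0, hνs, hν1⟩ := hB (x :: hist) CB hCB
        set S := ∑ q ∈ CB \ CA, 2 * astep M q (w q) x with hSdef
        have key : ∀ r ∈ CB, (∑ p ∈ CA, A (x :: hist) CA p *
              runAux M A T (M x) (x :: hist) (insert x (CA.erase p)))
            ≤ 2 * runAux M B T (M x) (x :: hist) (insert x (CB.erase r)) + (S + 1) := by
          intro r hr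
          have hxB' : x ∈ insert x (CB.erase r) := Finset.mem_insert_self x _
          have hKr : (insert x (CB.erase r) \ CA).erase x = (CB \ CA).erase r := by
            ext a
            simp only [Finset.mem_erase, Finset.mem_sdiff, Finset.mem_insert]
            constructor
            · rintro ⟨h1, (h2 | ⟨h3, h4⟩), h5⟩
              · exact absurd h2 h1
              · exact ⟨h3, h4, h5⟩
            · rintro ⟨h1, h2, h3⟩
              exact ⟨fun h => hxB (h ▸ h2), Or.inr ⟨h1, h2⟩, h3⟩
          set t : Fin n := if r ∈ CA then r else w r with htdef
          have hrx : r ≠ x := fun h => hxB (h ▸ hr)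
          have ht : t ∈ CA \ insert x (CB.erase r) := by
            rw [Finset.mem_sdiff, Finset.mem_insert]
            by_cases hrA : r ∈ CA
            · rw [htdef, if_pos hrA]
              exact ⟨hrA, by push_neg; exact ⟨hrx, Finset.notMem_erase r CB⟩⟩
            · rw [htdef, if_neg hrA]
              have hrQ : r ∈ CB \ CA := Finset.mem_sdiff.mpr ⟨hr, hrA⟩
              obtain ⟨h1, h2⟩ := Finset.mem_sdiff.mp (hw1 r hrQ)
              refine ⟨h1, by push_neg; exact ⟨fun h => hxA (h ▸ h1),
                fun h => h2 (Finset.mem_of_mem_erase h)⟩⟩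
          have htA : t ∈ CA := (Finset.mem_sdiff.mp ht).1
          have hw1K : ∀ q ∈ (insert x (CB.erase r) \ CA).erase x,
              w q ∈ CA \ insert x (CB.erase r) := by
            intro q hq
            rw [hKr] at hq
            obtain ⟨h1, h2⟩ := Finset.mem_sdiff.mp (hw1 q (Finset.mem_of_mem_erase hq))
            rw [Finset.mem_sdiff, Finset.mem_insert]
            refine ⟨h1, by push_neg; exact ⟨fun h => hxA (h ▸ h1),
              fun h => h2 (Finset.mem_of_mem_erase h)⟩⟩
          have hw2K : Set.InjOn w ↑((insert x (CB.erase r) \ CA).erase x) := by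
            rw [hKr]
            exact hw2.mono (by simp [Finset.coe_subset, Finset.erase_subset])
          have htw : ∀ q ∈ (insert x (CB.erase r) \ CA).erase x, w q ≠ t := by
            intro q hq
            rw [hKr] at hq
            by_cases hrA : r ∈ CA
            · rw [htdef, if_pos hrA]
              exact fun h =>
                (Finset.mem_sdiff.mp (hw1 q (Finset.mem_of_mem_erase hq))).2 (h ▸ hr)
            · rw [htdef, if_neg hrA]
              have hrQ : r ∈ CB \ CA := Finset.mem_sdiff.mpr ⟨hr, hrA⟩
              exact fun h => Finset.ne_of_mem_erase hq
                (hw2' q (Finset.mem_of_mem_erase hq) r hrQ h)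
          have hKle : (∑ q ∈ (insert x (CB.erase r) \ CA).erase x,
              2 * alphaProb M q (w q) x) ≤ S := by
            rw [hKr, hSdef]
            exact budget_le hM w hw1 hxA _ (Finset.erase_subset r _)
              (fun h => hxB (Finset.mem_sdiff.mp (Finset.mem_of_mem_erase h)).1)
          have keyp : ∀ p ∈ CA, runAux M A T (M x) (x :: hist) (insert x (CA.erase p))
              ≤ 2 * runAux M B T (M x) (x :: hist) (insert x (CB.erase r))
                + (S + 2 * alphaProb M p t x) := by
            intro p hp
            obtain ⟨w', hw1', hw2'', hsum⟩ :=
              evict_bound hM x CA (insert x (CB.erase r)) hxA hxB' p hp w t hw1K hw2K ht htw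
            have hcardA : (insert x (CA.erase p)).card = k := by
              rw [card_swap hp hxA]; exact hCA
            have hcardB : (insert x (CB.erase r)).card = k := by
              rw [card_swap hr hxB]; exact hCB
            have h1 := ih (M x) hMx (x :: hist) (insert x (CA.erase p))
              (insert x (CB.erase r)) hcardA hcardB w' hw1' hw2''
            linarith
          have hdom := hA.2 x hist CA hCA hxA t htA
          calc ∑ p ∈ CA, A (x :: hist) CA p *
                runAux M A T (M x) (x :: hist) (insert x (CA.erase p))
              ≤ ∑ p ∈ CA, A (x :: hist) CA p *
                  (2 * runAux M B T (M x) (x :: hist) (insert x (CB.erase r))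
                    + (S + 2 * alphaProb M p t x)) :=
                Finset.sum_le_sum fun p hp =>
                  mul_le_mul_of_nonneg_left (keyp p hp) (hμ0 p)
            _ = (∑ p ∈ CA, A (x :: hist) CA p) *
                  (2 * runAux M B T (M x) (x :: hist) (insert x (CB.erase r)) + S)
                + 2 * ∑ p ∈ CA, A (x :: hist) CA p * alphaProb M p t x := by
                rw [Finset.sum_mul, Finset.mul_sum, ← Finset.sum_add_distrib]
                exact Finset.sum_congr rfl fun p _ => by ring
            _ ≤ 2 * runAux M B T (M x) (x :: hist) (insert x (CB.erase r)) + (S + 1) := by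
                rw [hμ1, one_mul]
                linarith
        have hcomb : (∑ p ∈ CA, A (x :: hist) CA p *
              runAux M A T (M x) (x :: hist) (insert x (CA.erase p)))
            ≤ 2 * (∑ r ∈ CB, B (x :: hist) CB r *
                runAux M B T (M x) (x :: hist) (insert x (CB.erase r))) + (S + 1) := by
          calc (∑ p ∈ CA, A (x :: hist) CA p *
                runAux M A T (M x) (x :: hist) (insert x (CA.erase p)))
              = ∑ r ∈ CB, B (x :: hist) CB r * (∑ p ∈ CA, A (x :: hist) CA p *
                  runAux M A T (M x) (x :: hist) (insert x (CA.erase p))) := by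
                rw [← Finset.sum_mul, hν1, one_mul]
            _ ≤ ∑ r ∈ CB, B (x :: hist) CB r *
                  (2 * runAux M B T (M x) (x :: hist) (insert x (CB.erase r)) + (S + 1)) :=
                Finset.sum_le_sum fun r hr =>
                  mul_le_mul_of_nonneg_left (key r hr) (hν0 r)
            _ = 2 * (∑ r ∈ CB, B (x :: hist) CB r *
                  runAux M B T (M x) (x :: hist) (insert x (CB.erase r)))
                + (∑ r ∈ CB, B (x :: hist) CB r) * (S + 1) := by
                rw [Finset.mul_sum, Finset.sum_mul, ← Finset.sum_add_distrib]
                exact Finset.sum_congr rfl fun r _ => by ring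
            _ = _ + (S + 1) := by rw [hν1, one_mul]
        linarith
    -- assemble the per-request bounds
    rw [runAux, runAux]
    refine le_trans (assemble dist _ _
      (fun x => ∑ q ∈ CB \ CA, 2 * astep M q (w q) x) hd core) ?_
    rw [swap_sum dist (CB \ CA) (fun q x => astep M q (w q) x)]

end MainLemma

/-- **Theorem (2-competitiveness of the dominating distribution algorithm).**
Every dominating distribution algorithm `A` is 2-competitive against the optimal online
policy: for every online paging policy `B` started from the same initial cache and every
horizon `T`, `E[cost(A, T)] ≤ 2 · E[cost(B, T)]`. -/
theorem dominating_distribution_two_competitive {n k : ℕ} (hkn : k < n)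
    (M : Fin n → Fin n → ℝ) (hM : IsStochastic M)
    (init : Fin n → ℝ) (hinit : IsDist init)
    (C₀ : Finset (Fin n)) (hC₀ : C₀.card = k)
    (A : Policy n) (hA : IsDomPolicy k M A)
    (B : Policy n) (hB : IsPolicy k B) (T : ℕ) :
    expCost M init A C₀ T ≤ 2 * expCost M init B C₀ T := by
  have h := main_bound hM hA hB T init hinit.1 [] C₀ C₀ hC₀ hC₀ id
    (fun q hq => absurd hq (by simp)) (by rw [Finset.sdiff_self]; simp)
  rw [expCost, expCost]
  simpa [Finset.sdiff_self] using h
end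

section
/- There exist a Markov paging instance with n = 3 pages and cache size k = 2 — namely, the transition matrix whose three rows all equal (1−ε, ε₁, ε−ε₁) with ε = 10⁻⁵ and ε₁ = 0.7069·ε, with initial cache {1,2} — a dominating distribution algorithm A, and a horizon T = 10⁸, such that E[cost(A, T)] ≥ 1.5907 · inf_B E[cost(B, T)], where the infimum is over all online paging policies B started from the same initial cache. In particular, this dominating distribution algorithm is not c-competitive against the optimal online policy for any c < 1.5907. -/
open Finset

/-- The lower-bound instance: `n = 3` pages, and every row of the transition matrix is
`(1 − ε, ε₁, ε − ε₁)` with `ε = 10⁻⁵` and `ε₁ = 0.7069·ε` (so requests are i.i.d.). -/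
noncomputable def epsLB : ℝ := 1 / 100000

noncomputable def eps1LB : ℝ := 0.7069 * epsLB

noncomputable def MLB : Fin 3 → Fin 3 → ℝ := fun _ j =>
  if j = 0 then 1 - epsLB else if j = 1 then eps1LB else epsLB - eps1LB

/-- The initial request distribution of the instance (the common row, making the
requests i.i.d. from the first step on). -/
noncomputable def initLB : Fin 3 → ℝ := MLB 0
namespace DomLB

/-! ### Small decidable facts -/

lemma fne01 : (0:Fin 3) ≠ 1 := by decide
lemma fne02 : (0:Fin 3) ≠ 2 := by decide
lemma fne10 : (1:Fin 3) ≠ 0 := by decide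
lemma fne12 : (1:Fin 3) ≠ 2 := by decide
lemma fne20 : (2:Fin 3) ≠ 0 := by decide
lemma fne21 : (2:Fin 3) ≠ 1 := by decide

lemma card2 : ∀ C : Finset (Fin 3), C.card = 2 →
    C = {0,1} ∨ C = {0,2} ∨ C = {1,2} := by decide

/-! ### Entries of the transition matrix -/

lemma Ms0 (s : Fin 3) : MLB s 0 = 99999/100000 := by
  norm_num [MLB, epsLB]

lemma Ms1 (s : Fin 3) : MLB s 1 = 7069/1000000000 := by
  norm_num [MLB, epsLB, eps1LB, fne10]

lemma Ms2 (s : Fin 3) : MLB s 2 = 2931/1000000000 := by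
  norm_num [MLB, epsLB, eps1LB, fne20, fne21]

lemma MLB_nonneg (s j : Fin 3) : 0 ≤ MLB s j := by
  unfold MLB
  split_ifs <;> norm_num [epsLB, eps1LB]

lemma MLB_row (x : Fin 3) : MLB x = MLB 0 := rfl

/-! ### The two policies -/

/-- Eviction rule of the (bad) dominating distribution algorithm. -/
noncomputable def Aev : Finset (Fin 3) → Fin 3 → ℝ := fun C p =>
  if C = {0,1} then
    (if p = 0 then 999997069/1999980000 else if p = 1 then 1 - 999997069/1999980000 else 0)
  else if C = {0,2} then
    (if p = 0 then 999992931/1999980000 else if p = 2 then 1 - 999992931/1999980000 else 0)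
  else
    (if p = 1 then 5000/7069 else if p = 2 then 1 - 5000/7069 else 0)

/-- Eviction rule of the comparison (optimal-style) policy. -/
noncomputable def Bev : Finset (Fin 3) → Fin 3 → ℝ := fun C p =>
  if C = {0,1} then (if p = 1 then 1 else 0)
  else (if p = 2 then 1 else 0)

lemma A000 : Aev {0,1} 0 = 999997069/1999980000 := by
  unfold Aev; rw [if_pos rfl, if_pos rfl]

lemma A011 : Aev {0,1} 1 = 1 - 999997069/1999980000 := by
  unfold Aev; rw [if_pos rfl, if_neg fne10, if_pos rfl]

lemma A020 : Aev {0,2} 0 = 999992931/1999980000 := by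
  unfold Aev; rw [if_neg (by decide), if_pos rfl, if_pos rfl]

lemma A022 : Aev {0,2} 2 = 1 - 999992931/1999980000 := by
  unfold Aev; rw [if_neg (by decide), if_pos rfl, if_neg fne20, if_pos rfl]

lemma A121 : Aev {1,2} 1 = 5000/7069 := by
  unfold Aev; rw [if_neg (by decide), if_neg (by decide), if_pos rfl]

lemma A122 : Aev {1,2} 2 = 1 - 5000/7069 := by
  unfold Aev; rw [if_neg (by decide), if_neg (by decide), if_neg fne21, if_pos rfl]

lemma B010 : Bev {0,1} 0 = 0 := by
  unfold Bev; rw [if_pos rfl, if_neg fne01]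

lemma B011 : Bev {0,1} 1 = 1 := by
  unfold Bev; rw [if_pos rfl, if_pos rfl]

lemma B020 : Bev {0,2} 0 = 0 := by
  unfold Bev; rw [if_neg (by decide), if_neg fne02]

lemma B022 : Bev {0,2} 2 = 1 := by
  unfold Bev; rw [if_neg (by decide), if_pos rfl]

/-! ### History independence -/

lemma runAux_canon (f : Finset (Fin 3) → Fin 3 → ℝ) :
    ∀ (T : ℕ) (x : Fin 3) (h : List (Fin 3)) (C : Finset (Fin 3)),
      runAux MLB (fun _ => f) T (MLB x) h C = runAux MLB (fun _ => f) T (MLB 0) [] C := by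
  intro T
  induction T with
  | zero => intro x h C; simp [runAux]
  | succ T ih =>
    intro x h C
    simp only [runAux]
    simp only [ih, MLB_row]

/-! ### Cost sequences -/

noncomputable def UA (T : ℕ) : ℝ := runAux MLB (fun _ => Aev) T (MLB 0) [] {0,1}
noncomputable def VA (T : ℕ) : ℝ := runAux MLB (fun _ => Aev) T (MLB 0) [] {0,2}
noncomputable def WA (T : ℕ) : ℝ := runAux MLB (fun _ => Aev) T (MLB 0) [] {1,2}
noncomputable def PB (T : ℕ) : ℝ := runAux MLB (fun _ => Bev) T (MLB 0) [] {0,1}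
noncomputable def QB (T : ℕ) : ℝ := runAux MLB (fun _ => Bev) T (MLB 0) [] {0,2}

lemma UA_zero : UA 0 = 0 := rfl
lemma VA_zero : VA 0 = 0 := rfl
lemma WA_zero : WA 0 = 0 := rfl
lemma PB_zero : PB 0 = 0 := rfl
lemma QB_zero : QB 0 = 0 := rfl

lemma UA_succ (T : ℕ) : UA (T+1)
    = (999997069/1000000000) * UA T + (2931/1000000000) *
      (1 + (999997069/1999980000) * WA T + (1 - 999997069/1999980000) * VA T) := by
  show runAux MLB (fun _ => Aev) (T+1) (MLB 0) [] {0,1} = _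
  simp only [runAux, Fin.sum_univ_three]
  rw [if_pos (by decide : (0:Fin 3) ∈ ({0,1}:Finset (Fin 3))),
      if_pos (by decide : (1:Fin 3) ∈ ({0,1}:Finset (Fin 3))),
      if_neg (by decide : ¬ (2:Fin 3) ∈ ({0,1}:Finset (Fin 3)))]
  simp only [Finset.sum_insert (by decide : (0:Fin 3) ∉ ({1}:Finset (Fin 3))),
    Finset.sum_singleton]
  rw [show insert (2:Fin 3) (({0,1}:Finset (Fin 3)).erase 0) = ({1,2}:Finset (Fin 3)) from by decide,
      show insert (2:Fin 3) (({0,1}:Finset (Fin 3)).erase 1) = ({0,2}:Finset (Fin 3)) from by decide]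
  rw [runAux_canon Aev T 0 (0 :: []) {0,1}, runAux_canon Aev T 1 (1 :: []) {0,1},
      runAux_canon Aev T 2 (2 :: []) {1,2}, runAux_canon Aev T 2 (2 :: []) {0,2}]
  simp only [A000, A011, Ms0, Ms1, Ms2]
  simp only [UA, VA, WA]
  ring

lemma VA_succ (T : ℕ) : VA (T+1)
    = (999992931/1000000000) * VA T + (7069/1000000000) *
      (1 + (999992931/1999980000) * WA T + (1 - 999992931/1999980000) * UA T) := by
  show runAux MLB (fun _ => Aev) (T+1) (MLB 0) [] {0,2} = _
  simp only [runAux, Fin.sum_univ_three]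
  rw [if_pos (by decide : (0:Fin 3) ∈ ({0,2}:Finset (Fin 3))),
      if_neg (by decide : ¬ (1:Fin 3) ∈ ({0,2}:Finset (Fin 3))),
      if_pos (by decide : (2:Fin 3) ∈ ({0,2}:Finset (Fin 3)))]
  simp only [Finset.sum_insert (by decide : (0:Fin 3) ∉ ({2}:Finset (Fin 3))),
    Finset.sum_singleton]
  rw [show insert (1:Fin 3) (({0,2}:Finset (Fin 3)).erase 0) = ({1,2}:Finset (Fin 3)) from by decide,
      show insert (1:Fin 3) (({0,2}:Finset (Fin 3)).erase 2) = ({0,1}:Finset (Fin 3)) from by decide]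
  rw [runAux_canon Aev T 0 (0 :: []) {0,2}, runAux_canon Aev T 2 (2 :: []) {0,2},
      runAux_canon Aev T 1 (1 :: []) {1,2}, runAux_canon Aev T 1 (1 :: []) {0,1}]
  simp only [A020, A022, Ms0, Ms1, Ms2]
  simp only [UA, VA, WA]
  ring

lemma WA_succ (T : ℕ) : WA (T+1)
    = (1/100000) * WA T + (99999/100000) *
      (1 + (5000/7069) * VA T + (1 - 5000/7069) * UA T) := by
  show runAux MLB (fun _ => Aev) (T+1) (MLB 0) [] {1,2} = _
  simp only [runAux, Fin.sum_univ_three]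
  rw [if_neg (by decide : ¬ (0:Fin 3) ∈ ({1,2}:Finset (Fin 3))),
      if_pos (by decide : (1:Fin 3) ∈ ({1,2}:Finset (Fin 3))),
      if_pos (by decide : (2:Fin 3) ∈ ({1,2}:Finset (Fin 3)))]
  simp only [Finset.sum_insert (by decide : (1:Fin 3) ∉ ({2}:Finset (Fin 3))),
    Finset.sum_singleton]
  rw [show insert (0:Fin 3) (({1,2}:Finset (Fin 3)).erase 1) = ({0,2}:Finset (Fin 3)) from by decide,
      show insert (0:Fin 3) (({1,2}:Finset (Fin 3)).erase 2) = ({0,1}:Finset (Fin 3)) from by decide]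
  rw [runAux_canon Aev T 1 (1 :: []) {1,2}, runAux_canon Aev T 2 (2 :: []) {1,2},
      runAux_canon Aev T 0 (0 :: []) {0,2}, runAux_canon Aev T 0 (0 :: []) {0,1}]
  simp only [A121, A122, Ms0, Ms1, Ms2]
  simp only [UA, VA, WA]
  ring

lemma PB_succ (T : ℕ) : PB (T+1)
    = (999997069/1000000000) * PB T + (2931/1000000000) * (1 + QB T) := by
  show runAux MLB (fun _ => Bev) (T+1) (MLB 0) [] {0,1} = _
  simp only [runAux, Fin.sum_univ_three]
  rw [if_pos (by decide : (0:Fin 3) ∈ ({0,1}:Finset (Fin 3))),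
      if_pos (by decide : (1:Fin 3) ∈ ({0,1}:Finset (Fin 3))),
      if_neg (by decide : ¬ (2:Fin 3) ∈ ({0,1}:Finset (Fin 3)))]
  simp only [Finset.sum_insert (by decide : (0:Fin 3) ∉ ({1}:Finset (Fin 3))),
    Finset.sum_singleton]
  rw [show insert (2:Fin 3) (({0,1}:Finset (Fin 3)).erase 1) = ({0,2}:Finset (Fin 3)) from by decide]
  rw [runAux_canon Bev T 0 (0 :: []) {0,1}, runAux_canon Bev T 1 (1 :: []) {0,1},
      runAux_canon Bev T 2 (2 :: []) {0,2}]
  simp only [B010, B011, Ms0, Ms1, Ms2]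
  simp only [PB, QB]
  ring

lemma QB_succ (T : ℕ) : QB (T+1)
    = (999992931/1000000000) * QB T + (7069/1000000000) * (1 + PB T) := by
  show runAux MLB (fun _ => Bev) (T+1) (MLB 0) [] {0,2} = _
  simp only [runAux, Fin.sum_univ_three]
  rw [if_pos (by decide : (0:Fin 3) ∈ ({0,2}:Finset (Fin 3))),
      if_neg (by decide : ¬ (1:Fin 3) ∈ ({0,2}:Finset (Fin 3))),
      if_pos (by decide : (2:Fin 3) ∈ ({0,2}:Finset (Fin 3)))]
  simp only [Finset.sum_insert (by decide : (0:Fin 3) ∉ ({2}:Finset (Fin 3))),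
    Finset.sum_singleton]
  rw [show insert (1:Fin 3) (({0,2}:Finset (Fin 3)).erase 2) = ({0,1}:Finset (Fin 3)) from by decide]
  rw [runAux_canon Bev T 0 (0 :: []) {0,2}, runAux_canon Bev T 2 (2 :: []) {0,2},
      runAux_canon Bev T 1 (1 :: []) {0,1}]
  simp only [B020, B022, Ms0, Ms1, Ms2]
  simp only [PB, QB]
  ring

end DomLB

namespace DomLB

/-! ### Exact constants for the two affine systems -/

noncomputable def rA : ℝ :=
  14645993452645485348110686687596261/2221507447523978906877101701768373900000
noncomputable def cvA : ℝ :=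
  19500429642211632280038445262760000/22215074475239789068771017017683739
noncomputable def cwA : ℝ :=
  36007847551407229666535173531380000/22215074475239789068771017017683739
noncomputable def suA : ℝ :=
  14354329006576845676413000000000000/22215074475239789068771017017683739
noncomputable def svA : ℝ :=
  714608786185739457550918200000000/2019552225021799006251910637971249
noncomputable def swA : ℝ :=
  48820619809359297916817683739/22215074475239789068771017017683739

/-! ### Geometric decay bounds -/

lemma pow_one_sub_le_inv (x : ℝ) (h0 : 0 ≤ x) (h1 : x ≤ 1) (N : ℕ) :
    (1-x)^N ≤ 1/(1 + N*x) := by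
  have hpos : (0:ℝ) < 1 + N*x := by positivity
  rw [le_div_iff₀ hpos]
  have hb : 1 + (N:ℝ)*x ≤ (1+x)^N := one_add_mul_le_pow (by linarith) N
  have h2 : (1-x)^N * (1+N*x) ≤ (1-x)^N * (1+x)^N :=
    mul_le_mul_of_nonneg_left hb (pow_nonneg (by linarith) N)
  have h3 : (1-x)^N * (1+x)^N = (1-x^2)^N := by
    rw [← mul_pow]; ring_nf
  have h4 : (1-x^2)^N ≤ 1 := by
    apply pow_le_one₀ (by nlinarith) (by nlinarith)
  linarith

lemma rho_small : ((249999:ℝ)/250000)^(10^8:ℕ) ≤ 1/1000 := by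
  have h1 : ((249999:ℝ)/250000)^(20000000:ℕ) ≤ 1/81 := by
    have h := pow_one_sub_le_inv (1/250000) (by norm_num) (by norm_num) 20000000
    have e1 : (1:ℝ) - 1/250000 = 249999/250000 := by norm_num
    have e2 : 1/(1 + (20000000:ℕ)*((1:ℝ)/250000)) = (1:ℝ)/81 := by push_cast; norm_num
    rw [e1, e2] at h
    exact h
  have e3 : (10^8:ℕ) = 20000000*5 := by norm_num
  rw [e3, pow_mul]
  calc (((249999:ℝ)/250000)^(20000000:ℕ))^(5:ℕ) ≤ (1/81:ℝ)^(5:ℕ) :=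
        pow_le_pow_left₀ (pow_nonneg (by norm_num) _) h1 5
    _ ≤ 1/1000 := by norm_num

lemma lam_small : ((99999:ℝ)/100000)^(10^8:ℕ) ≤ 1/1000 := by
  have h1 : ((99999:ℝ)/100000)^(10000000:ℕ) ≤ 1/101 := by
    have h := pow_one_sub_le_inv (1/100000) (by norm_num) (by norm_num) 10000000
    have e1 : (1:ℝ) - 1/100000 = 99999/100000 := by norm_num
    have e2 : 1/(1 + (10000000:ℕ)*((1:ℝ)/100000)) = (1:ℝ)/101 := by push_cast; norm_num
    rw [e1, e2] at h
    exact h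
  have e3 : (10^8:ℕ) = 10000000*10 := by norm_num
  rw [e3, pow_mul]
  calc (((99999:ℝ)/100000)^(10000000:ℕ))^(10:ℕ) ≤ (1/101:ℝ)^(10:ℕ) :=
        pow_le_pow_left₀ (pow_nonneg (by norm_num) _) h1 10
    _ ≤ 1/1000 := by norm_num

/-! ### Closed form for the comparison policy -/

lemma B_form : ∀ T : ℕ,
    PB T = (20719239/5000000000000)*(T:ℝ) - 6064239/50000000
        + (6064239/50000000)*((99999:ℝ)/100000)^T
    ∧ QB T = (20719239/5000000000000)*(T:ℝ) + 2069/5000 - 6064239/50000000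
        - (14625761/50000000)*((99999:ℝ)/100000)^T := by
  intro T
  induction T with
  | zero =>
    constructor
    · rw [PB_zero]; norm_num
    · rw [QB_zero]; norm_num
  | succ T ih =>
    obtain ⟨hp, hq⟩ := ih
    constructor
    · rw [PB_succ, hp, hq]; push_cast; ring
    · rw [QB_succ, hp, hq]; push_cast; ring


end DomLB

namespace DomLB
lemma PB_upper : PB (10^8) ≤ (4142637:ℝ)/10000 := by
  obtain ⟨hp, hq⟩ := B_form (10^8)
  clear hq
  have hl := lam_small
  have hc : ((10^8:ℕ):ℝ) = 100000000 := by push_cast; norm_num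
  rw [hc] at hp
  generalize hL : ((99999:ℝ)/100000)^(10^8:ℕ) = L at hp hl
  rw [hp]
  clear hL hc
  linarith
end DomLB


namespace DomLB

lemma A_inv : ∀ T : ℕ,
    (suA * (UA T - rA * T) + svA * (VA T - rA * T - cvA) + swA * (WA T - rA * T - cwA)
        = -(svA * cvA) - swA * cwA)
    ∧ |VA T - UA T - cvA| ≤ cvA * ((249999:ℝ)/250000)^T
    ∧ |WA T - UA T - cwA| ≤ cwA * ((249999:ℝ)/250000)^T := by
  intro T
  induction T with
  | zero =>
    refine ⟨?_, ?_, ?_⟩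
    · rw [UA_zero, VA_zero, WA_zero]; push_cast; ring
    · rw [UA_zero, VA_zero, pow_zero, mul_one]
      rw [show (0:ℝ) - 0 - cvA = -cvA by ring, abs_neg,
        abs_of_nonneg (by rw [cvA]; positivity)]
    · rw [UA_zero, WA_zero, pow_zero, mul_one]
      rw [show (0:ℝ) - 0 - cwA = -cwA by ring, abs_neg,
        abs_of_nonneg (by rw [cwA]; positivity)]
  | succ T ih =>
    obtain ⟨hZ, h1, h2⟩ := ih
    have hd1 := abs_le.mp h1
    have hd2 := abs_le.mp h2
    clear h1 h2
    have hrT : (0:ℝ) ≤ ((249999:ℝ)/250000)^T := by positivity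
    refine ⟨?_, ?_, ?_⟩
    · rw [UA_succ, VA_succ, WA_succ]
      simp only [rA, cvA, cwA, suA, svA, swA] at hZ ⊢
      push_cast
      linear_combination hZ
    · rw [UA_succ, VA_succ, pow_succ, abs_le]
      simp only [cvA, cwA] at hd1 hd2 ⊢
      constructor
      · linarith [hd1.1, hd1.2, hd2.1, hd2.2, hrT]
      · linarith [hd1.1, hd1.2, hd2.1, hd2.2, hrT]
    · rw [UA_succ, WA_succ, pow_succ, abs_le]
      simp only [cvA, cwA] at hd1 hd2 ⊢
      constructor
      · linarith [hd1.1, hd1.2, hd2.1, hd2.2, hrT]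
      · linarith [hd1.1, hd1.2, hd2.1, hd2.2, hrT]

lemma UA_lower : (65897:ℝ)/100 ≤ UA (10^8) := by
  obtain ⟨hZ, h1, h2⟩ := A_inv (10^8)
  have hrho := rho_small
  have hrT : (0:ℝ) ≤ ((249999:ℝ)/250000)^(10^8:ℕ) := by positivity
  generalize hR : ((249999:ℝ)/250000)^(10^8:ℕ) = R at hZ h1 h2 hrho hrT
  clear hR
  have hd1 := abs_le.mp h1
  have hd2 := abs_le.mp h2
  clear h1 h2
  have hc : ((10^8:ℕ):ℝ) = 100000000 := by push_cast; norm_num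
  rw [hc] at hZ
  simp only [rA, cvA, cwA, suA, svA, swA] at hZ hd1 hd2
  clear hc
  linarith [hd1.1, hd1.2, hd2.1, hd2.2, hrho, hrT, hZ]

end DomLB

namespace DomLB

/-! ### Bounds on the alpha probabilities -/

lemma alphaAux_le (p q : Fin 3) (L : ℝ) (hL : 0 ≤ L)
    (h : ∀ s : Fin 3, (∑ x : Fin 3, MLB s x * (if x = q then 0 else if x = p then 1 else L)) ≤ L) :
    ∀ (T : ℕ) (s : Fin 3), alphaAux MLB p q T s ≤ L := by
  intro T
  induction T with
  | zero => intro s; simpa [alphaAux] using hL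
  | succ T ih =>
    intro s
    simp only [alphaAux]
    refine le_trans (Finset.sum_le_sum ?_) (h s)
    intro x _
    apply mul_le_mul_of_nonneg_left _ (MLB_nonneg s x)
    by_cases hq : x = q
    · simp [hq]
    · by_cases hp : x = p
      · simp [hq, hp]
      · simp only [if_neg hq, if_neg hp]; exact ih x

lemma alphaProb_self (p s : Fin 3) : alphaProb MLB p p s = 0 := by
  have h : ∀ (T : ℕ) (s : Fin 3), alphaAux MLB p p T s = 0 := by
    intro T
    induction T with
    | zero => intro s; rfl
    | succ T ih =>
      intro s
      simp only [alphaAux]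
      refine Finset.sum_eq_zero fun x _ => ?_
      by_cases hx : x = p
      · rw [if_pos hx, mul_zero]
      · rw [if_neg hx, if_neg hx, ih x, mul_zero]
  unfold alphaProb
  simp only [h]
  exact ciSup_const

lemma alpha01 (s : Fin 3) : alphaProb MLB 0 1 s ≤ 999990000/999997069 := by
  refine ciSup_le fun T => alphaAux_le 0 1 _ (by norm_num) (fun s' => ?_) T s
  rw [Fin.sum_univ_three, Ms0 s', Ms1 s', Ms2 s']
  norm_num [fne01, fne10, fne20, fne21]

lemma alpha10 (s : Fin 3) : alphaProb MLB 1 0 s ≤ 7069/999997069 := by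
  refine ciSup_le fun T => alphaAux_le 1 0 _ (by norm_num) (fun s' => ?_) T s
  rw [Fin.sum_univ_three, Ms0 s', Ms1 s', Ms2 s']
  norm_num [fne01, fne10, fne20, fne21]

lemma alpha02 (s : Fin 3) : alphaProb MLB 0 2 s ≤ 333330000/333330977 := by
  refine ciSup_le fun T => alphaAux_le 0 2 _ (by norm_num) (fun s' => ?_) T s
  rw [Fin.sum_univ_three, Ms0 s', Ms1 s', Ms2 s']
  norm_num [fne02, fne12, fne20, fne21]

lemma alpha20 (s : Fin 3) : alphaProb MLB 2 0 s ≤ 977/333330977 := by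
  refine ciSup_le fun T => alphaAux_le 2 0 _ (by norm_num) (fun s' => ?_) T s
  rw [Fin.sum_univ_three, Ms0 s', Ms1 s', Ms2 s']
  norm_num [fne02, fne12, fne20, fne10]

lemma alpha12 (s : Fin 3) : alphaProb MLB 1 2 s ≤ 7069/10000 := by
  refine ciSup_le fun T => alphaAux_le 1 2 _ (by norm_num) (fun s' => ?_) T s
  rw [Fin.sum_univ_three, Ms0 s', Ms1 s', Ms2 s']
  norm_num [fne02, fne12, fne01, fne10, fne20, fne21]

lemma alpha21 (s : Fin 3) : alphaProb MLB 2 1 s ≤ 2931/10000 := by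
  refine ciSup_le fun T => alphaAux_le 2 1 _ (by norm_num) (fun s' => ?_) T s
  rw [Fin.sum_univ_three, Ms0 s', Ms1 s', Ms2 s']
  norm_num [fne02, fne12, fne01, fne10, fne20, fne21]

/-! ### Validity of the two policies -/

lemma isPolicy_A : IsPolicy 2 (fun _ => Aev) := by
  intro hist C hC
  rcases card2 C hC with rfl | rfl | rfl
  · refine ⟨fun p => ?_, fun p hp => ?_, ?_⟩
    · show (0:ℝ) ≤ Aev {0,1} p
      unfold Aev; split_ifs <;> norm_num
    · show Aev {0,1} p = 0
      have hp0 : p ≠ 0 := by rintro rfl; exact hp (by decide)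
      have hp1 : p ≠ 1 := by rintro rfl; exact hp (by decide)
      unfold Aev; rw [if_pos rfl, if_neg hp0, if_neg hp1]
    · show (∑ p ∈ ({0,1}:Finset (Fin 3)), Aev {0,1} p) = 1
      rw [Finset.sum_insert (by decide), Finset.sum_singleton, A000, A011]
      norm_num
  · refine ⟨fun p => ?_, fun p hp => ?_, ?_⟩
    · show (0:ℝ) ≤ Aev {0,2} p
      unfold Aev; split_ifs <;> norm_num
    · show Aev {0,2} p = 0
      have hp0 : p ≠ 0 := by rintro rfl; exact hp (by decide)
      have hp2 : p ≠ 2 := by rintro rfl; exact hp (by decide)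
      unfold Aev; rw [if_neg (by decide), if_pos rfl, if_neg hp0, if_neg hp2]
    · show (∑ p ∈ ({0,2}:Finset (Fin 3)), Aev {0,2} p) = 1
      rw [Finset.sum_insert (by decide), Finset.sum_singleton, A020, A022]
      norm_num
  · refine ⟨fun p => ?_, fun p hp => ?_, ?_⟩
    · show (0:ℝ) ≤ Aev {1,2} p
      unfold Aev; split_ifs <;> norm_num
    · show Aev {1,2} p = 0
      have hp1 : p ≠ 1 := by rintro rfl; exact hp (by decide)
      have hp2 : p ≠ 2 := by rintro rfl; exact hp (by decide)
      unfold Aev; rw [if_neg (by decide), if_neg (by decide), if_neg hp1, if_neg hp2]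
    · show (∑ p ∈ ({1,2}:Finset (Fin 3)), Aev {1,2} p) = 1
      rw [Finset.sum_insert (by decide), Finset.sum_singleton, A121, A122]
      norm_num

lemma isPolicy_B : IsPolicy 2 (fun _ => Bev) := by
  intro hist C hC
  rcases card2 C hC with rfl | rfl | rfl
  · refine ⟨fun p => ?_, fun p hp => ?_, ?_⟩
    · show (0:ℝ) ≤ Bev {0,1} p
      unfold Bev; split_ifs <;> norm_num
    · show Bev {0,1} p = 0
      have hp1 : p ≠ 1 := by rintro rfl; exact hp (by decide)
      unfold Bev; rw [if_pos rfl, if_neg hp1]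
    · show (∑ p ∈ ({0,1}:Finset (Fin 3)), Bev {0,1} p) = 1
      rw [Finset.sum_insert (by decide), Finset.sum_singleton, B010, B011]
      norm_num
  · refine ⟨fun p => ?_, fun p hp => ?_, ?_⟩
    · show (0:ℝ) ≤ Bev {0,2} p
      unfold Bev; split_ifs <;> norm_num
    · show Bev {0,2} p = 0
      have hp2 : p ≠ 2 := by rintro rfl; exact hp (by decide)
      unfold Bev; rw [if_neg (by decide), if_neg hp2]
    · show (∑ p ∈ ({0,2}:Finset (Fin 3)), Bev {0,2} p) = 1
      rw [Finset.sum_insert (by decide), Finset.sum_singleton, B020, B022]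
      norm_num
  · refine ⟨fun p => ?_, fun p hp => ?_, ?_⟩
    · show (0:ℝ) ≤ Bev {1,2} p
      unfold Bev; split_ifs <;> norm_num
    · show Bev {1,2} p = 0
      have hp2 : p ≠ 2 := by rintro rfl; exact hp (by decide)
      unfold Bev; rw [if_neg (by decide), if_neg hp2]
    · show (∑ p ∈ ({1,2}:Finset (Fin 3)), Bev {1,2} p) = 1
      rw [Finset.sum_insert (by decide), Finset.sum_singleton]
      unfold Bev
      rw [if_neg (by decide), if_neg fne12, if_neg (by decide), if_pos rfl]
      norm_num

/-! ### The dominating distribution property -/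

lemma isDom_A : IsDomPolicy 2 MLB (fun _ => Aev) := by
  refine ⟨isPolicy_A, ?_⟩
  intro s hist C hC hs q hq
  rcases card2 C hC with rfl | rfl | rfl
  · -- C = {0,1}, so s = 2
    have hs2 : s = 2 := by
      fin_cases s
      · exact absurd (by decide) hs
      · exact absurd (by decide) hs
      · rfl
    subst hs2
    rw [Finset.mem_insert, Finset.mem_singleton] at hq
    rw [Finset.sum_insert (by decide), Finset.sum_singleton]
    rcases hq with rfl | rfl
    · simp only [alphaProb_self, mul_zero, A000, A011, zero_add]
      have hb := alpha10 2
      linarith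
    · simp only [alphaProb_self, mul_zero, A000, A011, add_zero]
      have hb := alpha01 2
      linarith
  · -- C = {0,2}, so s = 1
    have hs1 : s = 1 := by
      fin_cases s
      · exact absurd (by decide) hs
      · rfl
      · exact absurd (by decide) hs
    subst hs1
    rw [Finset.mem_insert, Finset.mem_singleton] at hq
    rw [Finset.sum_insert (by decide), Finset.sum_singleton]
    rcases hq with rfl | rfl
    · simp only [alphaProb_self, mul_zero, A020, A022, zero_add]
      have hb := alpha20 1
      linarith
    · simp only [alphaProb_self, mul_zero, A020, A022, add_zero]
      have hb := alpha02 1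
      linarith
  · -- C = {1,2}, so s = 0
    have hs0 : s = 0 := by
      fin_cases s
      · rfl
      · exact absurd (by decide) hs
      · exact absurd (by decide) hs
    subst hs0
    rw [Finset.mem_insert, Finset.mem_singleton] at hq
    rw [Finset.sum_insert (by decide), Finset.sum_singleton]
    rcases hq with rfl | rfl
    · simp only [alphaProb_self, mul_zero, A121, A122, zero_add]
      have hb := alpha21 0
      linarith
    · simp only [alphaProb_self, mul_zero, A121, A122, add_zero]
      have hb := alpha12 0
      linarith

/-! ### Nonnegativity of expected costs -/

lemma runAux_nonneg (pol : Policy 3) (hpol : IsPolicy 2 pol) :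
    ∀ (T : ℕ) (dist : Fin 3 → ℝ) (hist : List (Fin 3)) (C : Finset (Fin 3)),
      (∀ x, 0 ≤ dist x) → C.card = 2 → 0 ≤ runAux MLB pol T dist hist C := by
  intro T
  induction T with
  | zero => intro dist hist C _ _; simp [runAux]
  | succ T ih =>
    intro dist hist C hdist hC
    simp only [runAux]
    refine Finset.sum_nonneg fun x _ => mul_nonneg (hdist x) ?_
    by_cases hx : x ∈ C
    · rw [if_pos hx]
      exact ih (MLB x) (x :: hist) C (MLB_nonneg x) hC
    · rw [if_neg hx]
      have h1 : 0 ≤ ∑ p ∈ C, pol (x :: hist) C p *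
          runAux MLB pol T (MLB x) (x :: hist) (insert x (C.erase p)) := by
        refine Finset.sum_nonneg fun p hp => mul_nonneg ((hpol (x :: hist) C hC).1 p) ?_
        refine ih (MLB x) (x :: hist) _ (MLB_nonneg x) ?_
        rw [Finset.card_insert_of_notMem (fun hmem => hx (Finset.mem_of_mem_erase hmem)),
          Finset.card_erase_of_mem hp, hC]
      linarith

end DomLB


/-- **Theorem (lower bound for dominating distribution algorithms).**
On the Markov paging instance with `n = 3` pages, cache size `k = 2`, transition matrix
whose rows all equal `(1−ε, ε₁, ε−ε₁)` with `ε = 10⁻⁵`, `ε₁ = 0.7069·ε`, and initial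
cache `{1, 2}` (here `{0, 1} : Finset (Fin 3)`), there is a dominating distribution
algorithm `A` such that at horizon `T = 10⁸`,
`E[cost(A, T)] ≥ 1.5907 · inf_B E[cost(B, T)]`, the infimum being over all online paging
policies `B` started from the same initial cache.  In particular, `A` is not
`c`-competitive against the optimal online policy for any `c < 1.5907`. -/
theorem dominating_distribution_lower_bound :
    ∃ A : Policy 3, IsDomPolicy 2 MLB A ∧
      1.5907 * sInf {e : ℝ | ∃ B : Policy 3, IsPolicy 2 B ∧
          e = expCost MLB initLB B ({0, 1} : Finset (Fin 3)) (10 ^ 8)}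
        ≤ expCost MLB initLB A ({0, 1} : Finset (Fin 3)) (10 ^ 8) ∧
      ∀ c : ℝ, c < 1.5907 →
        ∃ T : ℕ, c * sInf {e : ℝ | ∃ B : Policy 3, IsPolicy 2 B ∧
            e = expCost MLB initLB B ({0, 1} : Finset (Fin 3)) T}
          < expCost MLB initLB A ({0, 1} : Finset (Fin 3)) T := by
  have hmem : expCost MLB initLB (fun _ => DomLB.Bev) ({0, 1} : Finset (Fin 3)) (10 ^ 8)
      ∈ {e : ℝ | ∃ B : Policy 3, IsPolicy 2 B ∧
          e = expCost MLB initLB B ({0, 1} : Finset (Fin 3)) (10 ^ 8)} :=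
    ⟨(fun _ => DomLB.Bev), DomLB.isPolicy_B, rfl⟩
  have hlb : ∀ e ∈ {e : ℝ | ∃ B : Policy 3, IsPolicy 2 B ∧
      e = expCost MLB initLB B ({0, 1} : Finset (Fin 3)) (10 ^ 8)}, (0:ℝ) ≤ e := by
    rintro e ⟨B, hB, rfl⟩
    exact DomLB.runAux_nonneg B hB (10 ^ 8) initLB [] {0, 1}
      (fun x => DomLB.MLB_nonneg 0 x) (by decide)
  have hbdd : BddBelow {e : ℝ | ∃ B : Policy 3, IsPolicy 2 B ∧
      e = expCost MLB initLB B ({0, 1} : Finset (Fin 3)) (10 ^ 8)} :=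
    ⟨0, fun e he => hlb e he⟩
  have hPB : expCost MLB initLB (fun _ => DomLB.Bev) ({0, 1} : Finset (Fin 3)) (10 ^ 8)
      = DomLB.PB (10 ^ 8) := rfl
  have hsInf : sInf {e : ℝ | ∃ B : Policy 3, IsPolicy 2 B ∧
      e = expCost MLB initLB B ({0, 1} : Finset (Fin 3)) (10 ^ 8)} ≤ (4142637:ℝ)/10000 := by
    refine le_trans (csInf_le hbdd hmem) ?_
    rw [hPB]; exact DomLB.PB_upper
  have hsInf0 : 0 ≤ sInf {e : ℝ | ∃ B : Policy 3, IsPolicy 2 B ∧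
      e = expCost MLB initLB B ({0, 1} : Finset (Fin 3)) (10 ^ 8)} :=
    le_csInf ⟨_, hmem⟩ hlb
  have hUA : expCost MLB initLB (fun _ => DomLB.Aev) ({0, 1} : Finset (Fin 3)) (10 ^ 8)
      = DomLB.UA (10 ^ 8) := rfl
  have hAlow := DomLB.UA_lower
  refine ⟨(fun _ => DomLB.Aev), DomLB.isDom_A, ?_, ?_⟩
  · rw [hUA]
    calc 1.5907 * sInf {e : ℝ | ∃ B : Policy 3, IsPolicy 2 B ∧
          e = expCost MLB initLB B ({0, 1} : Finset (Fin 3)) (10 ^ 8)}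
        ≤ 1.5907 * ((4142637:ℝ)/10000) :=
          mul_le_mul_of_nonneg_left hsInf (by norm_num)
      _ ≤ (65897:ℝ)/100 := by norm_num
      _ ≤ DomLB.UA (10 ^ 8) := hAlow
  · intro c hc
    refine ⟨10 ^ 8, ?_⟩
    rw [hUA]
    rcases le_or_gt c 0 with h0 | h0
    · have h4 : c * sInf {e : ℝ | ∃ B : Policy 3, IsPolicy 2 B ∧
          e = expCost MLB initLB B ({0, 1} : Finset (Fin 3)) (10 ^ 8)} ≤ 0 :=
        mul_nonpos_iff.mpr (Or.inr ⟨h0, hsInf0⟩)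
      exact h4.trans_lt (lt_of_lt_of_le (by norm_num) hAlow)
    · calc c * sInf {e : ℝ | ∃ B : Policy 3, IsPolicy 2 B ∧
            e = expCost MLB initLB B ({0, 1} : Finset (Fin 3)) (10 ^ 8)}
          ≤ c * ((4142637:ℝ)/10000) := mul_le_mul_of_nonneg_left hsInf h0.le
        _ < 1.5907 * ((4142637:ℝ)/10000) :=
            mul_lt_mul_of_pos_right hc (by norm_num)
        _ ≤ (65897:ℝ)/100 := by norm_num
        _ ≤ DomLB.UA (10 ^ 8) := hAlow
end
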